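/- If an idempotent semiring S satisfies the identity x ≈ xyx + x + xyx, then S satisfies the identity xyzx ≈ xzyx + xyzx + xzyx. -/
import Mathlib


class IdemSemiring' (S : Type*) extends Add S, Mul S where
  add_assoc : ∀ a b c : S, a + b + c = a + (b + c)
  mul_assoc : ∀ a b c : S, a * b * c = a * (b * c)
  left_distrib : ∀ a b c : S, a * (b + c) = a * b + a * c
  right_distrib : ∀ a b c : S, (a + b) * c = a * c + b * c
  add_idem : ∀ a : S, a + a = a
  mul_idem : ∀ a : S, a * a = a

def sigmaRel {S : Type*} [IdemSemiring' S] (a b : S) : Prop :=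
  a * b * a = a * b * a + a + a * b * a ∧ b * a * b = b * a * b + b + b * a * b

section Aux

variable {S : Type*} [IdemSemiring' S]

private lemma aAssoc (a b c : S) : a + b + c = a + (b + c) := IdemSemiring'.add_assoc a b c
private lemma mAssoc (a b c : S) : a * b * c = a * (b * c) := IdemSemiring'.mul_assoc a b c
private lemma lDist (a b c : S) : a * (b + c) = a * b + a * c := IdemSemiring'.left_distrib a b c
private lemma rDist (a b c : S) : (a + b) * c = a * c + b * c := IdemSemiring'.right_distrib a b c
private lemma aIdem (a : S) : a + a = a := IdemSemiring'.add_idem a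
private lemma mIdem (a : S) : a * a = a := IdemSemiring'.mul_idem a

private lemma addK (a t : S) : a + (a + t) = a + t := by
  rw [← aAssoc, aIdem]

private lemma mm (a b : S) : a * (a * b) = a * b := by
  rw [← mAssoc, mIdem]

/-- From `b = b + (t + (b + t))` and `b = t + (b + (t + b))` conclude that
`t` is absorbed by `b` on both sides. -/
private lemma absorb_pair (b t : S) (h1 : b = b + (t + (b + t)))
    (h2 : b = t + (b + (t + b))) : b + t = b ∧ t + b = b := by
  have e1 : (b + (t + b)) + t = b := by
    rw [aAssoc, aAssoc]; exact h1.symm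
  have e2 : t + (b + (t + b)) = b := h2.symm
  have e3 : b = (b + (t + b)) + (t + (b + (t + b))) := by
    calc b = b + b := (aIdem b).symm
      _ = ((b + (t + b)) + t) + (t + (b + (t + b))) := by rw [e1, e2]
      _ = (b + (t + b)) + (t + (t + (b + (t + b)))) := by rw [aAssoc]
      _ = (b + (t + b)) + (t + (b + (t + b))) := by rw [addK]
  have e4 : (b + (t + b)) + (t + (b + (t + b))) = b + (t + b) := by
    rw [e2, aAssoc, aAssoc, aIdem]
  have PB : b = b + (t + b) := e3.trans e4
  constructor
  · conv_lhs => rw [PB]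
    exact e1
  · conv_lhs => rw [PB]
    exact e2

/-- The band identity `(xzyx)(yzx)(xzyx) = xzyx`, valid in any band. -/
private lemma bandlem (x y z : S) :
    ((x*(z*(y*x)))*(y*(z*x)))*(x*(z*(y*x))) = x*(z*(y*x)) := by
  calc ((x*(z*(y*x)))*(y*(z*x)))*(x*(z*(y*x)))
      = x*(z*(y*(x*(y*(z*(x*(x*(z*(y*x))))))))) := by simp only [mAssoc]
    _ = x*(z*(y*(x*(y*(z*(x*(z*(y*x)))))))) := by rw [mm x (z*(y*x))]
    _ = x*(z*(y*(x*(y*(z*(x*(z*((y*x)*(y*x))))))))) := by rw [mIdem (y*x)]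
    _ = ((x*z)*(x*z))*(y*(x*(y*(z*(x*(z*((y*x)*(y*x)))))))) := by
        rw [mIdem (x*z)]; simp only [mAssoc]
    _ = x*((z*(x*(z*(y*(x*y)))))*((z*(x*(z*(y*(x*y)))))*x)) := by simp only [mAssoc]
    _ = x*((z*(x*(z*(y*(x*y)))))*x) := by rw [mm (z*(x*(z*(y*(x*y))))) x]
    _ = ((x*z)*(x*z))*((y*x)*(y*x)) := by simp only [mAssoc]
    _ = (x*z)*((y*x)*(y*x)) := by rw [mIdem (x*z)]
    _ = (x*z)*(y*x) := by rw [mIdem (y*x)]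
    _ = x*(z*(y*x)) := by simp only [mAssoc]

end Aux

theorem stmt16 {S : Type*} [IdemSemiring' S]
    (h : ∀ x y : S, x = x * y * x + x + x * y * x) :
    ∀ x y z : S, x * y * z * x = x * z * y * x + x * y * z * x + x * z * y * x := by
  intro x y z
  simp only [mAssoc]
  -- goal : x*(y*(z*x)) = x*(z*(y*x)) + x*(y*(z*x)) + x*(z*(y*x))
  set A := x*(z*(y*x)) with hA
  set b := x*(y*(z*x)) with hb
  set AB := A * (y*(z*x)) with hAB
  set BA := (x*(y*z)) * A with hBA
  -- basic band facts
  have exA : x * A = A := by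
    rw [hA, ← mAssoc x x (z*(y*x)), mIdem x]
  have epx : (x*(y*z))*x = b := by
    rw [hb]; simp only [mAssoc]
  have epxA : (x*(z*y))*x = A := by
    rw [hA]; simp only [mAssoc]
  have ebq : b * (y*(z*x)) = b := by
    rw [hb, mAssoc, mIdem]
  have epb : (x*(y*z)) * b = b := by
    calc (x*(y*z))*b = (x*(y*z))*((x*(y*z))*x) := by rw [epx]
      _ = ((x*(y*z))*(x*(y*z)))*x := by rw [← mAssoc (x*(y*z)) (x*(y*z)) x]
      _ = (x*(y*z))*x := by rw [mIdem (x*(y*z))]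
      _ = b := epx
  have ebA : b * A = BA := by
    have e : b = (x*(y*z))*x := epx.symm
    rw [hBA, e, mAssoc (x*(y*z)) x A, exA]
  -- dagger identities from h
  have dag0 := h x (y*z + z*y)
  rw [IdemSemiring'.left_distrib, IdemSemiring'.right_distrib, epx, epxA] at dag0
  -- dag0 : x = ((b + A) + x) + (b + A)
  have ddag0 := h x (z*y + y*z)
  rw [IdemSemiring'.left_distrib, IdemSemiring'.right_distrib, epxA, epx] at ddag0
  -- ddag0 : x = ((A + b) + x) + (A + b)
  -- multiply dagger on the right by y*(z*x)
  have E2 : x * (y*(z*x)) = (((b + A) + x) + (b + A)) * (y*(z*x)) :=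
    congrArg (fun t => t * (y*(z*x))) dag0
  rw [← hb] at E2
  simp only [rDist] at E2
  rw [← hb, ebq, ← hAB] at E2
  -- E2 : b = ((b + AB) + b) + (b + AB)
  simp only [aAssoc] at E2
  simp only [addK] at E2
  -- E2 : b = b + (AB + (b + AB))
  have E4 : x * (y*(z*x)) = (((A + b) + x) + (A + b)) * (y*(z*x)) :=
    congrArg (fun t => t * (y*(z*x))) ddag0
  rw [← hb] at E4
  simp only [rDist] at E4
  rw [← hb, ebq, ← hAB] at E4
  simp only [aAssoc] at E4
  simp only [addK] at E4
  -- E4 : b = AB + (b + (AB + b))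
  -- multiply dagger on the left by x*(y*z)
  have E1 : (x*(y*z)) * x = (x*(y*z)) * (((b + A) + x) + (b + A)) :=
    congrArg (fun t => (x*(y*z)) * t) dag0
  simp only [lDist] at E1
  rw [epx, epb, ← hBA] at E1
  simp only [aAssoc] at E1
  simp only [addK] at E1
  -- E1 : b = b + (BA + (b + BA))
  have E3 : (x*(y*z)) * x = (x*(y*z)) * (((A + b) + x) + (A + b)) :=
    congrArg (fun t => (x*(y*z)) * t) ddag0
  simp only [lDist] at E3
  rw [epx, epb, ← hBA] at E3
  simp only [aAssoc] at E3
  simp only [addK] at E3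
  -- E3 : b = BA + (b + (BA + b))
  obtain ⟨n1, n2⟩ := absorb_pair b AB E2 E4
  obtain ⟨n3, n4⟩ := absorb_pair b BA E1 E3
  -- multiply the AB-absorptions on the right by A
  have m1 : (b + AB) * A = b * A := congrArg (fun t => t * A) n1
  have m2 : (AB + b) * A = b * A := congrArg (fun t => t * A) n2
  simp only [rDist] at m1 m2
  rw [ebA] at m1 m2
  -- m1 : BA + AB*A = BA ; m2 : AB*A + BA = BA
  have k1 : AB*A + b = b := by
    calc AB*A + b = AB*A + (BA + b) := by rw [n4]
      _ = (AB*A + BA) + b := by rw [aAssoc]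
      _ = BA + b := by rw [m2]
      _ = b := n4
  have k2 : b + AB*A = b := by
    calc b + AB*A = (b + BA) + AB*A := by rw [n3]
      _ = b + (BA + AB*A) := by rw [aAssoc]
      _ = b + BA := by rw [m1]
      _ = b := n3
  -- the band identity : AB * A = A
  have bl : AB * A = A := by
    rw [hAB, hA]
    exact bandlem x y z
  have g1 : A + b = b := by rw [← bl]; exact k1
  have g2 : b + A = b := by rw [← bl]; exact k2
  -- finish
  rw [g1, g2]
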